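/- Fix n ≥ 2. The number of irreducible numerical semigroups with Frobenius number n that have exactly one minimal generator less than n/2 equals the number of integers a with 0 < a < n/2 that do not divide n. Equivalently, h_{n,1} = #{a ∈ ℤ : 0 < a < n/2 and a ∤ n}. -/

import Mathlib

/-!
Let `S` be irreducible with `F(S) = n` and let `a` be its only minimal generator below `n / 2`.
Every element of `S` below `n / 2` is a sum of minimal generators below `n / 2`, hence a multiple
of `a`; so `a ∤ n`, and since `x ∈ S` forces `n - x ∉ S`, `S` lies inside the semigroup
`S_a = smallGenSemigroup n a` made of the multiples of `a` below `n / 2`, the `x ∈ (n / 2, n)`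
with `a ∤ n - x`, and everything above `n`. As `F(S_a) = n`, maximality gives `S = S_a`.
Conversely `S_a` is irreducible, because every gap `x ≠ n / 2` below `n` has `n - x ∈ S_a`
(it is symmetric or pseudo-symmetric), and `a` is its only minimal generator below `n / 2`.
The semigroups counted by `h_{n,1}` are the `aℕ` with `2a < n` and `a ∤ n`.
-/

open Filter Topology
open scoped Classical BigOperators

/-- The set of gaps of a numerical semigroup `S ⊆ ℕ`. -/
def gapSet (S : AddSubmonoid ℕ) : Set ℕ := {n : ℕ | n ∉ S}

/-- `S` is cofinite if its set of gaps is finite. -/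
def IsCofinite (S : AddSubmonoid ℕ) : Prop := (gapSet S).Finite

/-- The minimal generators of `S`: nonzero elements of `S` that are not the
sum of two nonzero elements of `S`. -/
def minGens (S : AddSubmonoid ℕ) : Set ℕ :=
  {s : ℕ | s ∈ S ∧ s ≠ 0 ∧ ¬ ∃ a ∈ S, ∃ b ∈ S, a ≠ 0 ∧ b ≠ 0 ∧ s = a + b}

/-- The embedding dimension `e(S)`: the number of minimal generators of `S`. -/
noncomputable def embDim (S : AddSubmonoid ℕ) : ℕ := (minGens S).ncard

/-- The genus `g(S)`: the number of gaps of `S` (junk value `0` if `S` is not cofinite). -/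
noncomputable def genus (S : AddSubmonoid ℕ) : ℕ := (gapSet S).ncard

/-- The Frobenius number `F(S)`: the largest gap of `S`
(junk value `0` if `S` is not cofinite or `S = ℕ`). -/
noncomputable def frob (S : AddSubmonoid ℕ) : ℕ := sSup (gapSet S)

/-- A cofinite numerical semigroup `S ≠ ℕ` is irreducible if it is maximal with
respect to inclusion among numerical semigroups with Frobenius number `F(S)`. -/
def IsIrred (S : AddSubmonoid ℕ) : Prop :=
  IsCofinite S ∧ S ≠ ⊤ ∧
    ∀ T : AddSubmonoid ℕ, S ≤ T → frob T = frob S → T = S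

/-- The number of gaps of `S` that are at most `M`. -/
noncomputable def gapsUpTo (S : AddSubmonoid ℕ) (M : ℕ) : ℕ :=
  {x : ℕ | x ∉ S ∧ x ≤ M}.ncard

/-- The probability weight of a generating set `B ⊆ {1, …, M}` in the ER-type
model `S(M, p)`. -/
noncomputable def wt (p : ℝ) (M : ℕ) (B : Finset ℕ) : ℝ :=
  p ^ B.card * (1 - p) ^ (M - B.card)

/-- The probability in the ER-type model `S(M, p)` that the random numerical
semigroup `𝒮 = ⟨𝒜⟩` lies in the event `E`. -/
noncomputable def probEvent (M : ℕ) (p : ℝ) (E : Set (AddSubmonoid ℕ)) : ℝ :=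
  ∑ B ∈ (Finset.Icc 1 M).powerset,
    if AddSubmonoid.closure (B : Set ℕ) ∈ E then wt p M B else 0

/-- The expectation in the ER-type model `S(M, p)` of an invariant `X` of the
random numerical semigroup `𝒮 = ⟨𝒜⟩`. -/
noncomputable def expectVal (M : ℕ) (p : ℝ) (X : AddSubmonoid ℕ → ℕ) : ℝ :=
  ∑ B ∈ (Finset.Icc 1 M).powerset,
    (X (AddSubmonoid.closure (B : Set ℕ)) : ℝ) * wt p M B

/-- `h_{n,i}`: the number of numerical semigroups `T` with `n ∉ T`, embedding
dimension `i`, and all minimal generators strictly less than `n/2`. -/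
noncomputable def hvec (n i : ℕ) : ℕ :=
  {T : AddSubmonoid ℕ | n ∉ T ∧ embDim T = i ∧ ∀ a ∈ minGens T, 2 * a < n}.ncard

/-- `a_n(p)`: the probability that `n` is not in the semigroup generated by a
random subset of `{1, …, n-1}` chosen with inclusion probability `p`. -/
noncomputable def anp (n : ℕ) (p : ℝ) : ℝ :=
  ∑ A ∈ (Finset.Icc 1 (n - 1)).powerset,
    if n ∉ AddSubmonoid.closure (A : Set ℕ) then
      p ^ A.card * (1 - p) ^ (n - 1 - A.card) else 0

lemma mem_closure_singleton_iff_dvd {a x : ℕ} :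
    x ∈ AddSubmonoid.closure ({a} : Set ℕ) ↔ a ∣ x := by
  simp only [AddSubmonoid.mem_closure_singleton, smul_eq_mul, dvd_iff_exists_eq_mul_left, eq_comm]

section Semigroup

variable {S : AddSubmonoid ℕ} {n a x : ℕ}

lemma mem_of_dvd (ha : a ∈ S) (hx : a ∣ x) : x ∈ S :=
  AddSubmonoid.closure_le.mpr (Set.singleton_subset_iff.mpr ha)
    (mem_closure_singleton_iff_dvd.mpr hx)

lemma sub_notMem_of_mem (hn : n ∉ S) (hx : x ∈ S) (hxn : x ≤ n) : n - x ∉ S := fun h =>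
  hn (by simpa [Nat.add_sub_cancel' hxn] using S.add_mem hx h)

lemma frob_eq (hn : n ∉ S) (h : ∀ x, n < x → x ∈ S) : frob S = n :=
  IsGreatest.csSup_eq ⟨hn, fun x hx => not_lt.mp fun hlt => hx (h x hlt)⟩

lemma mem_of_frob_lt (hS : IsCofinite S) (hx : frob S < x) : x ∈ S :=
  by_contra fun h => (le_csSup hS.bddAbove h).not_gt hx

lemma frob_notMem (hS : IsCofinite S) (h : frob S ≠ 0) : frob S ∉ S := by
  have hne : (gapSet S).Nonempty := by
    by_contra hempty
    rw [Set.not_nonempty_iff_eq_empty] at hempty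
    exact h (by rw [frob, hempty, csSup_empty, Nat.bot_eq_zero])
  exact Nat.sSup_mem hne hS.bddAbove

lemma isIrred_of_sub_mem (hS : IsCofinite S) (hn : n ∉ S) (hfrob : frob S = n)
    (hsymm : ∀ x, x ∉ S → x < n → 2 * x ≠ n → n - x ∈ S) : IsIrred S := by
  refine ⟨hS, fun h => hn (h ▸ AddSubmonoid.mem_top n), fun T hST hfrobT => ?_⟩
  have hT : IsCofinite T := hS.subset fun x hx hxT => hx (hST hxT)
  have hnT : n ∉ T := by
    have hn0 : n ≠ 0 := by rintro rfl; exact hn S.zero_mem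
    rw [← hfrob, ← hfrobT] at hn0 ⊢
    exact frob_notMem hT hn0
  refine le_antisymm (fun x hxT => by_contra fun hxS => ?_) hST
  have hxn : x < n := by
    rcases lt_trichotomy x n with h | rfl | h
    · exact h
    · exact absurd hxT hnT
    · exact absurd (mem_of_frob_lt hS (hfrob ▸ h)) hxS
  by_cases h2x : 2 * x = n
  · exact sub_notMem_of_mem hnT hxT hxn.le (by rwa [show n - x = x by omega])
  · exact sub_notMem_of_mem hnT hxT hxn.le (hST (hsymm x hxS hxn h2x))

lemma mem_closure_minGens_inter_Iic (hx : x ∈ S) :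
    x ∈ AddSubmonoid.closure (minGens S ∩ Set.Iic x) := by
  induction x using Nat.strong_induction_on with
  | _ x ih =>
    by_cases hmin : x ∈ minGens S
    · exact AddSubmonoid.subset_closure ⟨hmin, Set.mem_Iic.mpr le_rfl⟩
    rcases eq_or_ne x 0 with rfl | hx0
    · exact zero_mem _
    obtain ⟨u, hu, v, hv, hu0, hv0, rfl⟩ : ∃ u ∈ S, ∃ v ∈ S, u ≠ 0 ∧ v ≠ 0 ∧ x = u + v := by
      by_contra h
      exact hmin ⟨hx, hx0, h⟩
    have mono (y : ℕ) (hy : y ≤ u + v) := AddSubmonoid.closure_mono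
      (Set.inter_subset_inter_right (minGens S) (Set.Iic_subset_Iic.mpr hy))
    exact add_mem (mono u (by omega) (ih u (by omega) hu)) (mono v (by omega) (ih v (by omega) hv))

lemma closure_minGens (S : AddSubmonoid ℕ) : AddSubmonoid.closure (minGens S) = S :=
  le_antisymm (AddSubmonoid.closure_le.mpr fun _ hs => hs.1) fun _ hx =>
    AddSubmonoid.closure_mono Set.inter_subset_left (mem_closure_minGens_inter_Iic hx)

lemma dvd_of_mem_of_two_mul_lt (h : ∀ s ∈ minGens S, 2 * s < n → s = a) (hx : x ∈ S)
    (hxn : 2 * x < n) : a ∣ x := by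
  have hsub : minGens S ∩ Set.Iic x ⊆ {a} := fun s ⟨hs, hsx⟩ =>
    h s hs (by rw [Set.mem_Iic] at hsx; omega)
  exact mem_closure_singleton_iff_dvd.mp
    (AddSubmonoid.closure_mono hsub (mem_closure_minGens_inter_Iic hx))

lemma eq_of_mem_minGens_of_dvd {s : ℕ} (ha : a ∈ S) (ha0 : a ≠ 0) (hs : s ∈ minGens S)
    (hdvd : a ∣ s) : s = a := by
  by_contra hne
  have has : a < s := lt_of_le_of_ne (Nat.le_of_dvd (Nat.pos_of_ne_zero hs.2.1) hdvd) (Ne.symm hne)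
  exact hs.2.2 ⟨a, ha, s - a, mem_of_dvd ha (Nat.dvd_sub hdvd dvd_rfl), ha0, by omega, by omega⟩

lemma mem_minGens_of_forall_le (ha : a ∈ S) (ha0 : a ≠ 0) (h : ∀ x ∈ S, x ≠ 0 → a ≤ x) :
    a ∈ minGens S := by
  refine ⟨ha, ha0, ?_⟩
  rintro ⟨u, hu, v, hv, hu0, hv0, rfl⟩
  have := h u hu hu0
  have := h v hv hv0
  omega

end Semigroup

lemma minGens_closure_singleton {a : ℕ} (ha : a ≠ 0) :
    minGens (AddSubmonoid.closure {a}) = {a} := by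
  have hmem : a ∈ AddSubmonoid.closure {a} := AddSubmonoid.subset_closure rfl
  refine Set.eq_singleton_iff_unique_mem.mpr ⟨mem_minGens_of_forall_le hmem ha fun x hx hx0 => ?_,
    fun s hs => eq_of_mem_minGens_of_dvd hmem ha hs (mem_closure_singleton_iff_dvd.mp hs.1)⟩
  exact Nat.le_of_dvd (Nat.pos_of_ne_zero hx0) (mem_closure_singleton_iff_dvd.mp hx)

lemma closure_singleton_inj {a b : ℕ}
    (h : AddSubmonoid.closure ({a} : Set ℕ) = AddSubmonoid.closure {b}) : a = b :=
  Nat.dvd_antisymm (mem_closure_singleton_iff_dvd.mp (h ▸ AddSubmonoid.subset_closure rfl))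
    (mem_closure_singleton_iff_dvd.mp (h.symm ▸ AddSubmonoid.subset_closure rfl))

def SmallGenMem (n a x : ℕ) : Prop :=
  (2 * x < n ∧ a ∣ x) ∨ (n < 2 * x ∧ x < n ∧ ¬ a ∣ n - x) ∨ n < x

namespace SmallGenMem

variable {n a x y : ℕ}

lemma add_of_lt_of_gt (hx : 2 * x < n ∧ a ∣ x) (hy : n < 2 * y ∧ y < n ∧ ¬ a ∣ n - y) :
    SmallGenMem n a (x + y) := by
  obtain ⟨-, hxa⟩ := hx
  obtain ⟨hy1, hy2, hya⟩ := hy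
  rcases lt_trichotomy (x + y) n with hlt | heq | hgt
  · refine Or.inr (Or.inl ⟨by omega, hlt, fun hd => hya ?_⟩)
    simpa [show n - (x + y) + x = n - y by omega] using dvd_add hd hxa
  · exact absurd (by rwa [show n - y = x by omega]) hya
  · exact Or.inr (Or.inr hgt)

lemma add_of_lt_of_lt (ha : ¬ a ∣ n) (hx : 2 * x < n ∧ a ∣ x) (hy : 2 * y < n ∧ a ∣ y) :
    SmallGenMem n a (x + y) := by
  have hxy : a ∣ x + y := dvd_add hx.2 hy.2
  by_cases hsmall : 2 * (x + y) < n
  · exact Or.inl ⟨hsmall, hxy⟩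
  have hne : x + y ≠ n := fun h => ha (h ▸ hxy)
  have hne' : 2 * (x + y) ≠ n := fun h => ha (h ▸ hxy.mul_left 2)
  rcases lt_or_gt_of_ne hne with hlt | hgt
  · refine Or.inr (Or.inl ⟨by omega, hlt, fun hd => ha ?_⟩)
    simpa [Nat.sub_add_cancel hlt.le] using dvd_add hd hxy
  · exact Or.inr (Or.inr hgt)

lemma add (ha : ¬ a ∣ n) (hx : SmallGenMem n a x) (hy : SmallGenMem n a y) :
    SmallGenMem n a (x + y) := by
  rcases hx with hx | hx | hx <;> rcases hy with hy | hy | hy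
  · exact add_of_lt_of_lt ha hx hy
  · exact add_of_lt_of_gt hx hy
  · exact Or.inr (Or.inr (by omega))
  · exact add_comm x y ▸ add_of_lt_of_gt hy hx
  all_goals exact Or.inr (Or.inr (by omega))

end SmallGenMem

def smallGenSemigroup (n a : ℕ) (ha : ¬ a ∣ n) : AddSubmonoid ℕ where
  carrier := {x | SmallGenMem n a x}
  zero_mem' := Or.inl ⟨Nat.pos_of_ne_zero (by rintro rfl; exact ha (dvd_zero a)), dvd_zero a⟩
  add_mem' := SmallGenMem.add ha

section smallGenSemigroup

variable {n a x : ℕ} (ha : ¬ a ∣ n)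

lemma self_notMem_smallGenSemigroup : n ∉ smallGenSemigroup n a ha := by
  rintro (⟨h, -⟩ | ⟨-, h, -⟩ | h) <;> omega

lemma mem_smallGenSemigroup_of_lt (hx : n < x) : x ∈ smallGenSemigroup n a ha :=
  Or.inr (Or.inr hx)

lemma frob_smallGenSemigroup : frob (smallGenSemigroup n a ha) = n :=
  frob_eq (self_notMem_smallGenSemigroup ha) fun _ => mem_smallGenSemigroup_of_lt ha

lemma isCofinite_smallGenSemigroup : IsCofinite (smallGenSemigroup n a ha) :=
  (Set.finite_Iic n).subset fun _ hx =>
    Set.mem_Iic.mpr (not_lt.mp fun h => hx (mem_smallGenSemigroup_of_lt ha h))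

lemma isIrred_smallGenSemigroup : IsIrred (smallGenSemigroup n a ha) := by
  refine isIrred_of_sub_mem (isCofinite_smallGenSemigroup ha) (self_notMem_smallGenSemigroup ha)
    (frob_smallGenSemigroup ha) fun x hx hxn h2x => ?_
  rcases lt_or_gt_of_ne h2x with hlt | hgt
  · have hxa : ¬ a ∣ x := fun hd => hx (Or.inl ⟨hlt, hd⟩)
    have hx0 : x ≠ 0 := by rintro rfl; exact hxa (dvd_zero a)
    exact Or.inr (Or.inl ⟨by omega, by omega, by rwa [Nat.sub_sub_self hxn.le]⟩)
  · exact Or.inl ⟨by omega, not_not.mp fun hd => hx (Or.inr (Or.inl ⟨hgt, hxn, hd⟩))⟩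

lemma self_mem_smallGenSemigroup (h2a : 2 * a < n) : a ∈ smallGenSemigroup n a ha :=
  Or.inl ⟨h2a, dvd_rfl⟩

lemma dvd_of_mem_smallGenSemigroup (hx : x ∈ smallGenSemigroup n a ha) (hxn : 2 * x < n) :
    a ∣ x := by
  rcases hx with ⟨-, hd⟩ | ⟨h, -⟩ | h
  · exact hd
  all_goals omega

lemma smallGenSemigroup_inj {b : ℕ} (hb : ¬ b ∣ n) (h2a : 2 * a < n) (h2b : 2 * b < n)
    (h : smallGenSemigroup n a ha = smallGenSemigroup n b hb) : a = b :=
  Nat.dvd_antisymm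
    (dvd_of_mem_smallGenSemigroup ha (h ▸ self_mem_smallGenSemigroup hb h2b) h2b)
    (dvd_of_mem_smallGenSemigroup hb (h ▸ self_mem_smallGenSemigroup ha h2a) h2a)

lemma smallMinGens_smallGenSemigroup (ha0 : a ≠ 0) (h2a : 2 * a < n) :
    {s | s ∈ minGens (smallGenSemigroup n a ha) ∧ 2 * s < n} = {a} := by
  have haS := self_mem_smallGenSemigroup ha h2a
  refine Set.eq_singleton_iff_unique_mem.mpr
    ⟨⟨mem_minGens_of_forall_le haS ha0 fun x hx hx0 => ?_, h2a⟩, fun s ⟨hs, hsn⟩ =>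
      eq_of_mem_minGens_of_dvd haS ha0 hs (dvd_of_mem_smallGenSemigroup ha hs.1 hsn)⟩
  rcases hx with ⟨-, hd⟩ | ⟨h, -⟩ | h
  · exact Nat.le_of_dvd (Nat.pos_of_ne_zero hx0) hd
  all_goals omega

lemma le_smallGenSemigroup {S : AddSubmonoid ℕ} (hn : n ∉ S) (haS : a ∈ S)
    (hdvd : ∀ x ∈ S, 2 * x < n → a ∣ x) : S ≤ smallGenSemigroup n a ha := by
  intro x hx
  rcases lt_trichotomy (2 * x) n with h | h | h
  · exact Or.inl ⟨h, hdvd x hx h⟩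
  · exact absurd hx (by simpa [show n - x = x by omega] using sub_notMem_of_mem hn hx (by omega))
  rcases lt_trichotomy x n with h' | rfl | h'
  · exact Or.inr (Or.inl ⟨h, h', fun hd => sub_notMem_of_mem hn hx h'.le (mem_of_dvd haS hd)⟩)
  · exact absurd hx hn
  · exact Or.inr (Or.inr h')

end smallGenSemigroup

lemma eq_smallGenSemigroup_of_isIrred {S : AddSubmonoid ℕ} {n a : ℕ} (hS : IsIrred S)
    (hfrob : frob S = n) (haS : a ∈ minGens S) (h2a : 2 * a < n)
    (hsmall : ∀ s ∈ minGens S, 2 * s < n → s = a) :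
    ∃ ha : ¬ a ∣ n, smallGenSemigroup n a ha = S := by
  have hn : n ∉ S := hfrob ▸ frob_notMem hS.1 (by omega)
  have ha : ¬ a ∣ n := fun hd => hn (mem_of_dvd haS.1 hd)
  have hle := le_smallGenSemigroup ha hn haS.1 fun _ => dvd_of_mem_of_two_mul_lt hsmall
  exact ⟨ha, hS.2.2 _ hle (by rw [frob_smallGenSemigroup, hfrob])⟩

lemma ncard_isIrred_smallMinGens_eq_one (n : ℕ) :
    {S : AddSubmonoid ℕ | IsIrred S ∧ frob S = n ∧
        {a : ℕ | a ∈ minGens S ∧ 2 * a < n}.ncard = 1}.ncard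
      = {a : ℕ | 0 < a ∧ 2 * a < n ∧ ¬ a ∣ n}.ncard := by
  symm
  refine Set.ncard_congr (fun a ha => smallGenSemigroup n a ha.2.2) ?_ ?_ ?_
  · rintro a ⟨ha0, h2a, ha⟩
    refine ⟨isIrred_smallGenSemigroup ha, frob_smallGenSemigroup ha, ?_⟩
    rw [smallMinGens_smallGenSemigroup ha ha0.ne' h2a, Set.ncard_singleton]
  · exact fun a b ha hb h => smallGenSemigroup_inj ha.2.2 hb.2.2 ha.2.1 hb.2.1 h
  · rintro S ⟨hS, hfrob, hcard⟩
    obtain ⟨a, hsmall⟩ := Set.ncard_eq_one.mp hcard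
    obtain ⟨⟨haS, h2a⟩, hsmall⟩ := Set.eq_singleton_iff_unique_mem.mp hsmall
    obtain ⟨ha, rfl⟩ :=
      eq_smallGenSemigroup_of_isIrred hS hfrob haS h2a fun s hs hsn => hsmall s ⟨hs, hsn⟩
    exact ⟨a, ⟨Nat.pos_of_ne_zero haS.2.1, h2a, ha⟩, rfl⟩

lemma hvec_one (n : ℕ) : hvec n 1 = {a : ℕ | 0 < a ∧ 2 * a < n ∧ ¬ a ∣ n}.ncard := by
  symm
  refine Set.ncard_congr (fun a _ => AddSubmonoid.closure {a}) ?_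
    (fun a b _ _ h => closure_singleton_inj h) ?_
  · rintro a ⟨ha0, h2a, ha⟩
    refine ⟨fun h => ha (mem_closure_singleton_iff_dvd.mp h), ?_, fun s hs => ?_⟩
    · rw [embDim, minGens_closure_singleton ha0.ne', Set.ncard_singleton]
    · rw [minGens_closure_singleton ha0.ne', Set.mem_singleton_iff] at hs
      exact hs ▸ h2a
  · rintro T ⟨hnT, hdim, hsmall⟩
    obtain ⟨b, hb⟩ := Set.ncard_eq_one.mp hdim
    have hbT : b ∈ minGens T := hb ▸ rfl
    exact ⟨b, ⟨Nat.pos_of_ne_zero hbT.2.1, hsmall b hbT, fun hd => hnT (mem_of_dvd hbT.1 hd)⟩,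
      hb ▸ closure_minGens T⟩

theorem statement7_general (n : ℕ) :
    {S : AddSubmonoid ℕ | IsIrred S ∧ frob S = n ∧
        {a : ℕ | a ∈ minGens S ∧ 2 * a < n}.ncard = 1}.ncard
      = {a : ℕ | 0 < a ∧ 2 * a < n ∧ ¬ a ∣ n}.ncard ∧
    hvec n 1 = {a : ℕ | 0 < a ∧ 2 * a < n ∧ ¬ a ∣ n}.ncard :=
  ⟨ncard_isIrred_smallMinGens_eq_one n, hvec_one n⟩

theorem statement7 (n : ℕ) (hn : 2 ≤ n) :
    {S : AddSubmonoid ℕ | IsIrred S ∧ frob S = n ∧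
        {a : ℕ | a ∈ minGens S ∧ 2 * a < n}.ncard = 1}.ncard
      = {a : ℕ | 0 < a ∧ 2 * a < n ∧ ¬ a ∣ n}.ncard ∧
    hvec n 1 = {a : ℕ | 0 < a ∧ 2 * a < n ∧ ¬ a ∣ n}.ncard :=
  statement7_general n
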